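/- With notation as in the C⁰ smoothness condition, suppose c̃_{0jk} = c_{0kj} for all j+k = d. Then the piecewise function equal to p on T and p̃ on T̃ is C¹ across the common edge e (i.e., the gradients of p and p̃ agree on the line through v_2, v_3) if and only if c̃_{1jk} = b_1 c_{1,k,j} + b_2 c_{0,k+1,j} + b_3 c_{0,k,j+1} for all j+k = d−1, where (b_1,b_2,b_3) are the barycentric coordinates of v_4 relative to T. -/

import Mathlib

/-!
Write `p = P_c ∘ β` and `p̃ = P_c̃ ∘ β̃`, where `P_c` is the Bernstein–Bézier polynomial on `ℝ³`
with coefficients `c`. The barycentric map `β̃` of `T̃` is affine, and `β = Φ_b ∘ β̃` for the linear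
change of coordinates `Φ_b` given by `v₄ = b₀v₁ + b₁v₂ + b₂v₃`. On the edge the first barycentric
coordinate vanishes, so only the coefficients with first index `≤ 1` enter the gradients there.
By the C⁰ condition the tangential parts of the two gradients cancel, and at the edge point
`(1 - s)v₂ + sv₃` the difference `∇p̃ - ∇p` is `∇β̃₀` times the degree `d - 1` Bernstein polynomial
in `s` with coefficients `M(1,j,k) (c̃_{1jk} - b₀c_{1kj} - b₁c_{0,k+1,j} - b₂c_{0,k,j+1})`.
By linear independence of the Bernstein basis, that polynomial vanishes identically iff all of
these coefficients are zero.
-/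

open Finset
open ContinuousLinearMap (proj)

namespace Nat

theorem factorial_mul_multinomial_three (a b c : ℕ) :
    a ! * b ! * c ! * multinomial univ ![a, b, c] = (a + b + c)! := by
  have := multinomial_spec (univ : Finset (Fin 3)) ![a, b, c]
  simpa [Fin.prod_univ_three, Fin.sum_univ_three, add_assoc] using this

theorem multinomial_three_swap (a j k : ℕ) :
    multinomial univ ![a, j, k] = multinomial univ ![a, k, j] := by
  have h := factorial_mul_multinomial_three a j k
  rw [show a + j + k = a + k + j by ring, ← factorial_mul_multinomial_three a k j,
    mul_right_comm a ! j !] at h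
  exact Nat.eq_of_mul_eq_mul_left (by positivity) h

theorem succ_mul_multinomial_three_mid (j k : ℕ) :
    (j + 1) * multinomial univ ![0, j + 1, k] = multinomial univ ![1, j, k] := by
  have h0 := factorial_mul_multinomial_three 0 (j + 1) k
  have h1 := factorial_mul_multinomial_three 1 j k
  rw [show 0 + (j + 1) + k = 1 + j + k by ring, ← h1, factorial_succ] at h0
  refine Nat.eq_of_mul_eq_mul_left (show 0 < j ! * k ! from by positivity) ?_
  simp only [factorial_zero, factorial_one, one_mul] at h0 h1 ⊢
  linarith

theorem succ_mul_multinomial_three_last (j k : ℕ) :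
    (k + 1) * multinomial univ ![0, j, k + 1] = multinomial univ ![1, j, k] := by
  rw [multinomial_three_swap, succ_mul_multinomial_three_mid, multinomial_three_swap]

end Nat

theorem Continuous.eq_zero_of_one_sub_mul_eq_zero {g : ℝ → ℝ} (hg : Continuous g)
    (h : ∀ s, (1 - s) * g s = 0) (s : ℝ) : g s = 0 := by
  have : g = fun _ => 0 :=
    Continuous.ext_on (dense_compl_singleton 1) hg continuous_const fun s hs =>
      (mul_eq_zero.mp (h s)).resolve_left (sub_ne_zero.mpr (Ne.symm hs))
  exact congrFun this s

theorem forall_sum_bernstein_eq_zero_iff (n : ℕ) (a : ℕ × ℕ → ℝ) :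
    (∀ s : ℝ, ∑ jk ∈ antidiagonal n, a jk * (s ^ jk.1 * (1 - s) ^ jk.2) = 0) ↔
      ∀ jk ∈ antidiagonal n, a jk = 0 := by
  refine ⟨fun h => ?_, fun h s => sum_eq_zero fun jk hjk => by rw [h jk hjk, zero_mul]⟩
  induction n generalizing a with
  | zero => simpa using h 0
  | succ n ih =>
    simp only [Nat.sum_antidiagonal_succ'] at h
    have hlast : a (n + 1, 0) = 0 := by simpa using h 1
    have hrest : ∀ s : ℝ,
        ∑ jk ∈ antidiagonal n, a (jk.1, jk.2 + 1) * (s ^ jk.1 * (1 - s) ^ jk.2) = 0 := by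
      refine Continuous.eq_zero_of_one_sub_mul_eq_zero (by fun_prop) fun s => ?_
      rw [← h s, hlast, zero_mul, zero_add, mul_sum]
      exact sum_congr rfl fun jk _ => by ring
    rintro ⟨j, _ | k⟩ hjk <;> rw [HasAntidiagonal.mem_antidiagonal] at hjk
    · obtain rfl : j = n + 1 := by simpa using hjk
      exact hlast
    · exact ih (fun jk => a (jk.1, jk.2 + 1)) hrest (j, k)
        (HasAntidiagonal.mem_antidiagonal.mpr (by omega))

theorem sum_antidiagonalTuple_three {M : Type*} [AddCommMonoid M] (d : ℕ) (G : (Fin 3 → ℕ) → M) :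
    ∑ t ∈ Nat.antidiagonalTuple 3 d, G t =
      ∑ am ∈ antidiagonal d, ∑ jk ∈ antidiagonal am.2, G ![am.1, jk.1, jk.2] := by
  rw [← sum_sigma (antidiagonal d) (fun am => antidiagonal am.2)
    (fun x => G ![x.1.1, x.2.1, x.2.2])]
  refine sum_nbij' (fun t => ⟨(t 0, t 1 + t 2), (t 1, t 2)⟩) (fun x => ![x.1.1, x.2.1, x.2.2])
    ?_ ?_ ?_ ?_ ?_
  · intro t ht
    simp only [mem_sigma, HasAntidiagonal.mem_antidiagonal, and_true]
    simpa [Nat.mem_antidiagonalTuple, Fin.sum_univ_three, add_assoc] using ht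
  · rintro ⟨⟨a, m⟩, j, k⟩ hx
    simp only [mem_sigma, HasAntidiagonal.mem_antidiagonal] at hx
    simp only [Nat.mem_antidiagonalTuple, Fin.sum_univ_three, Matrix.cons_val_zero,
      Matrix.cons_val_one, Matrix.cons_val]
    omega
  · intro t _
    ext i
    fin_cases i <;> rfl
  · rintro ⟨⟨a, m⟩, j, k⟩ hx
    simp only [mem_sigma, HasAntidiagonal.mem_antidiagonal] at hx
    obtain rfl := hx.2
    rfl
  · intro t _
    congr
    ext i
    fin_cases i <;> rfl

theorem sum_antidiagonalTuple_three_succ {M : Type*} [AddCommMonoid M] (n : ℕ)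
    (G : (Fin 3 → ℕ) → M) (hG : ∀ a j k, 2 ≤ a → G ![a, j, k] = 0) :
    ∑ t ∈ Nat.antidiagonalTuple 3 (n + 1), G t =
      ∑ jk ∈ antidiagonal (n + 1), G ![0, jk.1, jk.2] +
        ∑ jk ∈ antidiagonal n, G ![1, jk.1, jk.2] := by
  rw [sum_antidiagonalTuple_three,
    Nat.sum_antidiagonal_succ (f := fun am => ∑ jk ∈ antidiagonal am.2, G ![am.1, jk.1, jk.2]),
    sum_eq_single_of_mem (0, n) (HasAntidiagonal.mem_antidiagonal.mpr (zero_add n))]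
  · intro am ham hne
    refine sum_eq_zero fun jk _ => hG _ _ _ ?_
    rw [HasAntidiagonal.mem_antidiagonal] at ham
    contrapose! hne
    ext <;> simp only <;> omega

noncomputable def bernsteinBezier (d : ℕ) (c : (Fin 3 → ℕ) → ℝ) (y : Fin 3 → ℝ) : ℝ :=
  ∑ t ∈ Nat.antidiagonalTuple 3 d, c t * ((Nat.multinomial univ t : ℝ) * ∏ i, y i ^ t i)

noncomputable def bernsteinBezierFaceDeriv (n : ℕ) (c : (Fin 3 → ℕ) → ℝ) (u w : ℝ) :
    (Fin 3 → ℝ) →L[ℝ] ℝ :=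
  ∑ jk ∈ antidiagonal n, ((Nat.multinomial univ ![1, jk.1, jk.2] : ℝ) * (u ^ jk.1 * w ^ jk.2)) •
    (c ![1, jk.1, jk.2] • proj 0 + c ![0, jk.1 + 1, jk.2] • proj 1 +
      c ![0, jk.1, jk.2 + 1] • proj 2)

theorem bernsteinBezierFaceDeriv_apply (n : ℕ) (c : (Fin 3 → ℕ) → ℝ) (u w : ℝ) (a : Fin 3 → ℝ) :
    bernsteinBezierFaceDeriv n c u w a =
      ∑ jk ∈ antidiagonal n, (Nat.multinomial univ ![1, jk.1, jk.2] : ℝ) * (u ^ jk.1 * w ^ jk.2) *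
        (a 0 * c ![1, jk.1, jk.2] + a 1 * c ![0, jk.1 + 1, jk.2] +
          a 2 * c ![0, jk.1, jk.2 + 1]) := by
  simp only [bernsteinBezierFaceDeriv, _root_.sum_apply, _root_.smul_apply,
    _root_.add_apply, ContinuousLinearMap.proj_apply, smul_eq_mul]
  exact sum_congr rfl fun _ _ => by ring

theorem hasFDerivAt_bernsteinBezier_face (n : ℕ) (c : (Fin 3 → ℕ) → ℝ) (u w : ℝ) :
    HasFDerivAt (bernsteinBezier (n + 1) c) (bernsteinBezierFaceDeriv n c u w) ![0, u, w] := by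
  set y : Fin 3 → ℝ := ![0, u, w]
  have hpow (i : Fin 3) (k : ℕ) : HasFDerivAt (fun z : Fin 3 → ℝ => z i ^ k)
      ((k • y i ^ (k - 1)) • proj i) y := (hasFDerivAt_apply (𝕜 := ℝ) i y).pow k
  have hterm (t : Fin 3 → ℕ) :=
    ((hpow 0 (t 0)).fun_mul ((hpow 1 (t 1)).fun_mul (hpow 2 (t 2)))).const_mul
      (c t * Nat.multinomial univ t)
  have hsum := HasFDerivAt.fun_sum (u := Nat.antidiagonalTuple 3 (n + 1)) fun t _ => hterm t
  have hfun : bernsteinBezier (n + 1) c = fun z => ∑ t ∈ Nat.antidiagonalTuple 3 (n + 1),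
      c t * Nat.multinomial univ t * (z 0 ^ t 0 * (z 1 ^ t 1 * z 2 ^ t 2)) := by
    ext z
    simp only [bernsteinBezier, Fin.prod_univ_three, mul_assoc]
  rw [hfun]
  refine hsum.congr_fderiv (ContinuousLinearMap.ext fun a => ?_)
  simp only [_root_.sum_apply, _root_.smul_apply, _root_.add_apply, smul_eq_mul,
    ContinuousLinearMap.proj_apply, nsmul_eq_mul, bernsteinBezierFaceDeriv_apply]
  -- At `y₀ = 0` the terms with `t₀ ≥ 2` vanish; the `t₀ = 0` terms are then re-indexed by
  -- `(j + 1) M(0, j + 1, k) = M(1, j, k)`.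
  rw [sum_antidiagonalTuple_three_succ _ _ fun a j k ha => by
    simp [y, zero_pow (show a ≠ 0 by omega), zero_pow (show a - 1 ≠ 0 by omega)]]
  simp only [y, Matrix.cons_val_zero, Matrix.cons_val_one, Matrix.cons_val_two, Matrix.head_cons,
    Matrix.tail_cons, pow_zero, pow_one, Nat.cast_zero, Nat.cast_one, zero_mul, mul_zero, add_zero,
    zero_add, one_mul, mul_add, sum_add_distrib]
  rw [Nat.sum_antidiagonal_succ', Nat.sum_antidiagonal_succ]
  simp only [Nat.cast_zero, zero_mul, mul_zero, zero_add, add_tsub_cancel_right, Nat.sub_self,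
    pow_zero, one_mul]
  simp only [← sum_add_distrib]
  refine sum_congr rfl fun jk _ => ?_
  have hmid : ((jk.1 + 1 : ℕ) : ℝ) * Nat.multinomial univ ![0, jk.1 + 1, jk.2] =
      Nat.multinomial univ ![1, jk.1, jk.2] := mod_cast Nat.succ_mul_multinomial_three_mid ..
  have hlast : ((jk.2 + 1 : ℕ) : ℝ) * Nat.multinomial univ ![0, jk.1, jk.2 + 1] =
      Nat.multinomial univ ![1, jk.1, jk.2] := mod_cast Nat.succ_mul_multinomial_three_last ..
  linear_combination (c ![0, jk.1 + 1, jk.2] * u ^ jk.1 * w ^ jk.2 * a 1) * hmid +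
    (c ![0, jk.1, jk.2 + 1] * u ^ jk.1 * w ^ jk.2 * a 2) * hlast

/-- Barycentric coordinates w.r.t. `⟨v₁,v₂,v₃⟩` from those w.r.t. `⟨v₄,v₃,v₂⟩`, when `b` are the
coordinates of `v₄` w.r.t. `⟨v₁,v₂,v₃⟩`. -/
noncomputable def baryChange (b : Fin 3 → ℝ) : (Fin 3 → ℝ) →L[ℝ] Fin 3 → ℝ :=
  ContinuousLinearMap.pi ![b 0 • proj 0,
    b 1 • proj 0 + proj 2,
    b 2 • proj 0 + proj 1]

theorem baryChange_apply (b y : Fin 3 → ℝ) :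
    baryChange b y = ![b 0 * y 0, b 1 * y 0 + y 2, b 2 * y 0 + y 1] := by
  ext i
  fin_cases i <;> rfl

theorem sum_baryChange_apply {b : Fin 3 → ℝ} (hb : ∑ i, b i = 1) (y : Fin 3 → ℝ) :
    ∑ i, baryChange b y i = ∑ i, y i := by
  simp only [baryChange_apply, Fin.sum_univ_three] at hb ⊢
  simp only [Matrix.cons_val_zero, Matrix.cons_val_one, Matrix.cons_val_two, Matrix.head_cons,
    Matrix.tail_cons]
  linear_combination y 0 * hb

theorem sum_baryChange_apply_smul {V : Type*} [AddCommGroup V] [Module ℝ V] {b : Fin 3 → ℝ}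
    {v₁ v₂ v₃ v₄ : V} (hb : ∑ i, b i • ![v₁, v₂, v₃] i = v₄) (y : Fin 3 → ℝ) :
    ∑ i, baryChange b y i • ![v₁, v₂, v₃] i = ∑ i, y i • ![v₄, v₃, v₂] i := by
  simp only [baryChange_apply, Fin.sum_univ_three, ← hb, Matrix.cons_val_zero, Matrix.cons_val_one,
    Matrix.cons_val_two, Matrix.head_cons, Matrix.tail_cons, smul_add, add_smul]
  module

theorem bernsteinBezierFaceDeriv_sub_comp_baryChange (n : ℕ) (b : Fin 3 → ℝ)
    (c c' : (Fin 3 → ℕ) → ℝ) (hC0 : ∀ j k : ℕ, j + k = n + 1 → c' ![0, j, k] = c ![0, k, j])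
    (u w : ℝ) :
    bernsteinBezierFaceDeriv n c' w u - (bernsteinBezierFaceDeriv n c u w).comp (baryChange b) =
      (∑ jk ∈ antidiagonal n, (Nat.multinomial univ ![1, jk.1, jk.2] : ℝ) *
        (c' ![1, jk.1, jk.2] - (b 0 * c ![1, jk.2, jk.1] + b 1 * c ![0, jk.2 + 1, jk.1] +
          b 2 * c ![0, jk.2, jk.1 + 1])) * (w ^ jk.1 * u ^ jk.2)) • proj 0 := by
  ext a
  have hswap : bernsteinBezierFaceDeriv n c u w (baryChange b a) =
      ∑ jk ∈ antidiagonal n, (Nat.multinomial univ ![1, jk.1, jk.2] : ℝ) * (w ^ jk.1 * u ^ jk.2) *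
        (baryChange b a 0 * c ![1, jk.2, jk.1] + baryChange b a 1 * c ![0, jk.2 + 1, jk.1] +
          baryChange b a 2 * c ![0, jk.2, jk.1 + 1]) := by
    rw [bernsteinBezierFaceDeriv_apply, ← Nat.sum_antidiagonal_swap]
    refine sum_congr rfl fun jk _ => ?_
    rw [Prod.fst_swap, Prod.snd_swap, Nat.multinomial_three_swap]
    ring
  rw [_root_.sub_apply, ContinuousLinearMap.comp_apply, hswap, bernsteinBezierFaceDeriv_apply,
    ← sum_sub_distrib, _root_.smul_apply, ContinuousLinearMap.proj_apply, smul_eq_mul, sum_mul]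
  refine sum_congr rfl fun jk hjk => ?_
  rw [HasAntidiagonal.mem_antidiagonal] at hjk
  simp only [baryChange_apply, Matrix.cons_val_zero, Matrix.cons_val_one, Matrix.cons_val_two,
    Matrix.head_cons, Matrix.tail_cons]
  rw [hC0 _ _ (by omega), hC0 _ _ (by omega)]
  ring

theorem fderiv_bernsteinBezier_comp_eq_iff {E : Type*} [NormedAddCommGroup E] [NormedSpace ℝ E]
    (n : ℕ) (b : Fin 3 → ℝ) (c c' : (Fin 3 → ℕ) → ℝ)
    (hC0 : ∀ j k : ℕ, j + k = n + 1 → c' ![0, j, k] = c ![0, k, j])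
    (A : E →ᴬ[ℝ] Fin 3 → ℝ) {e : E} (he : A.contLinear e 0 ≠ 0) {x : E} {u w : ℝ}
    (hx : A x = ![0, w, u]) :
    fderiv ℝ (bernsteinBezier (n + 1) c ∘ baryChange b ∘ A) x =
        fderiv ℝ (bernsteinBezier (n + 1) c' ∘ A) x ↔
      ∑ jk ∈ antidiagonal n, (Nat.multinomial univ ![1, jk.1, jk.2] : ℝ) *
        (c' ![1, jk.1, jk.2] - (b 0 * c ![1, jk.2, jk.1] + b 1 * c ![0, jk.2 + 1, jk.1] +
          b 2 * c ![0, jk.2, jk.1 + 1])) * (w ^ jk.1 * u ^ jk.2) = 0 := by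
  have hΦx : ![0, u, w] = baryChange b (A x) := by rw [hx, baryChange_apply]; simp
  have hF := hasFDerivAt_bernsteinBezier_face n c u w
  have hF' := hasFDerivAt_bernsteinBezier_face n c' w u
  rw [hΦx] at hF
  rw [← hx] at hF'
  rw [(hF.comp x ((baryChange b).hasFDerivAt.comp x A.hasFDerivAt)).fderiv,
    (hF'.comp x A.hasFDerivAt).fderiv, eq_comm, ← sub_eq_zero, ← ContinuousLinearMap.comp_assoc,
    ← ContinuousLinearMap.sub_comp, bernsteinBezierFaceDeriv_sub_comp_baryChange n b c c' hC0]
  refine ⟨fun h => ?_, fun h => by rw [h, zero_smul, ContinuousLinearMap.zero_comp]⟩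
  have he' := congrArg (fun f => f e) h
  simp only [ContinuousLinearMap.comp_apply, _root_.smul_apply, ContinuousLinearMap.proj_apply,
    smul_eq_mul, _root_.zero_apply, mul_eq_zero] at he'
  exact he'.resolve_right he

theorem AffineIndependent.apply_eq_of_sum_smul_eq {ι V : Type*} [Fintype ι] [AddCommGroup V]
    [Module ℝ V] {v : ι → V} (hv : AffineIndependent ℝ v) {β : V → ι → ℝ}
    (hβ1 : ∀ x, ∑ i, β x i = 1) (hβ2 : ∀ x, ∑ i, β x i • v i = x) {w : ι → ℝ} {x : V}
    (hw1 : ∑ i, w i = 1) (hw2 : ∑ i, w i • v i = x) : β x = w :=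
  funext fun i =>
    hv.eq_of_sum_eq_sum ((hβ1 x).trans hw1.symm) ((hβ2 x).trans hw2.symm) i (mem_univ i)

theorem AffineIndependent.exists_continuousAffineMap_eq {ι E : Type*} [Fintype ι]
    [NormedAddCommGroup E] [NormedSpace ℝ E] [FiniteDimensional ℝ E] {v : ι → E}
    (hv : AffineIndependent ℝ v) (hcard : Fintype.card ι = Module.finrank ℝ E + 1)
    {β : E → ι → ℝ} (hβ1 : ∀ x, ∑ i, β x i = 1) (hβ2 : ∀ x, ∑ i, β x i • v i = x) :
    ∃ A : E →ᴬ[ℝ] ι → ℝ, ⇑A = β := by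
  let B : AffineBasis ι ℝ E := ⟨v, hv, hv.affineSpan_eq_top_iff_card_eq_finrank_add_one.mpr hcard⟩
  refine ⟨⟨B.coords, B.coords.continuous_of_finiteDimensional⟩, funext fun x => ?_⟩
  exact (hv.apply_eq_of_sum_smul_eq hβ1 hβ2 (B.sum_coord_apply_eq_one x)
    (B.linear_combination_coord_eq_self x)).symm

/-- C¹ smoothness condition in Bernstein–Bézier form: given the C⁰ condition
`c̃_{0jk} = c_{0kj}` (`j+k=d`), the piecewise function equal to `p` on `T` and
`p̃` on `T̃` is C¹ across the common edge (the gradients of `p` and `p̃` agree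
on the line through `v₂,v₃`) if and only if
`c̃_{1jk} = b₁ c_{1,k,j} + b₂ c_{0,k+1,j} + b₃ c_{0,k,j+1}` for all `j+k = d−1`,
where `(b₁,b₂,b₃)` are the barycentric coordinates of `v₄` relative to `T`. -/
theorem bb_c1_smoothness
    (d : ℕ) (hd : 1 ≤ d) (v₁ v₂ v₃ v₄ : Fin 2 → ℝ)
    (hT : AffineIndependent ℝ ![v₁, v₂, v₃])
    (hT' : AffineIndependent ℝ ![v₄, v₃, v₂])
    (β β' : (Fin 2 → ℝ) → Fin 3 → ℝ)
    (hβ1 : ∀ x, ∑ i, β x i = 1)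
    (hβ2 : ∀ x, ∑ i, β x i • ![v₁, v₂, v₃] i = x)
    (hβ'1 : ∀ x, ∑ i, β' x i = 1)
    (hβ'2 : ∀ x, ∑ i, β' x i • ![v₄, v₃, v₂] i = x)
    (b : Fin 3 → ℝ)
    (hb1 : ∑ i, b i = 1)
    (hb2 : ∑ i, b i • ![v₁, v₂, v₃] i = v₄)
    (c c' : (Fin 3 → ℕ) → ℝ)
    (p p' : (Fin 2 → ℝ) → ℝ)
    (hp : ∀ x, p x = ∑ t ∈ Finset.Nat.antidiagonalTuple 3 d,
      c t * ((Nat.multinomial Finset.univ t : ℝ) * ∏ i, β x i ^ t i))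
    (hp' : ∀ x, p' x = ∑ t ∈ Finset.Nat.antidiagonalTuple 3 d,
      c' t * ((Nat.multinomial Finset.univ t : ℝ) * ∏ i, β' x i ^ t i))
    (hC0 : ∀ j k : ℕ, j + k = d → c' ![0, j, k] = c ![0, k, j]) :
    (∀ s : ℝ, fderiv ℝ p ((1 - s) • v₂ + s • v₃) =
        fderiv ℝ p' ((1 - s) • v₂ + s • v₃)) ↔
      (∀ j k : ℕ, j + k = d - 1 →
        c' ![1, j, k] =
          b 0 * c ![1, k, j] + b 1 * c ![0, k + 1, j] + b 2 * c ![0, k, j + 1]) := by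
  obtain ⟨n, rfl⟩ : ∃ n, d = n + 1 := ⟨d - 1, by omega⟩
  obtain ⟨A, rfl⟩ := hT'.exists_continuousAffineMap_eq (by simp) hβ'1 hβ'2
  have hvertex (w : Fin 3 → ℝ) (hw : ∑ i, w i = 1) : A (∑ i, w i • ![v₄, v₃, v₂] i) = w :=
    hT'.apply_eq_of_sum_smul_eq hβ'1 hβ'2 hw rfl
  have hedge (s : ℝ) : A ((1 - s) • v₂ + s • v₃) = ![0, s, 1 - s] := by
    simpa [Fin.sum_univ_three, add_comm] using hvertex ![0, s, 1 - s] (by simp [Fin.sum_univ_three])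
  have he : A.contLinear (v₄ - v₂) 0 ≠ 0 := by
    have h₄ := hvertex ![1, 0, 0] (by simp [Fin.sum_univ_three])
    have h₂ := hvertex ![0, 0, 1] (by simp [Fin.sum_univ_three])
    simp only [Fin.sum_univ_three, Matrix.cons_val_zero, Matrix.cons_val_one, Matrix.cons_val_two,
      Matrix.head_cons, Matrix.tail_cons, one_smul, zero_smul, add_zero, zero_add] at h₄ h₂
    rw [← vsub_eq_sub, ContinuousAffineMap.contLinear_map_vsub, vsub_eq_sub, Pi.sub_apply, h₄, h₂]
    norm_num
  have hβ (x) : β x = baryChange b (A x) := hT.apply_eq_of_sum_smul_eq hβ1 hβ2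
    (by rw [sum_baryChange_apply hb1, hβ'1]) (by rw [sum_baryChange_apply_smul hb2, hβ'2])
  have hpA : p = bernsteinBezier (n + 1) c ∘ baryChange b ∘ A := funext fun x => by rw [hp, hβ]; rfl
  have hp'A : p' = bernsteinBezier (n + 1) c' ∘ A := funext hp'
  simp only [hpA, hp'A, fderiv_bernsteinBezier_comp_eq_iff n b c c' hC0 A he (hedge _)]
  rw [forall_sum_bernstein_eq_zero_iff]
  simp only [Prod.forall, HasAntidiagonal.mem_antidiagonal, mul_eq_zero, Nat.cast_eq_zero,
    (Nat.multinomial_pos _ _).ne', false_or, sub_eq_zero, Nat.add_sub_cancel]
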